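/- arXiv:2209.05029 — 5 statements merged into one kernel-verified Lean document; each statement's English description precedes it below -/
import Mathlib

section
/- Let E be a finite-dimensional real inner product space and let Φ₊ be a finite set of nonzero vectors of E all contained in a common open half-space, i.e. there exists v ∈ E with ⟨α, v⟩ > 0 for every α ∈ Φ₊. Then for every M > 0 there exists δ₀ > 0, depending only on Φ₊, v and M, such that every point x ∈ E satisfying ⟨α, x⟩ > 0 for all α ∈ Φ₊ and ‖ Σ_{α∈Φ₊} coth(⟨α, x⟩) · α ‖ ≤ M also satisfies ⟨α, x⟩ ≥ δ₀ for all α ∈ Φ₊. -/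
/-!
Pair the vector `∑ coth⟨α,x⟩ • α` with `v`: all terms `coth⟨α,x⟩ ⟪α,v⟫` are positive, so each
one is at most `M ‖v‖`. Since `coth s > 1/s`, this gives `⟪α,x⟫ ≥ ⟪α,v⟫ / (M ‖v‖)`, and the
minimum of these finitely many positive numbers is the uniform `δ₀`.
-/

open scoped RealInnerProductSpace

noncomputable def coth (s : ℝ) : ℝ := Real.cosh s / Real.sinh s

lemma Real.sinh_lt_mul_cosh {s : ℝ} (hs : 0 < s) : Real.sinh s < s * Real.cosh s := by
  have hmono : StrictMonoOn (fun t : ℝ => t * Real.cosh t - Real.sinh t) (Set.Ici 0) := by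
    refine strictMonoOn_of_deriv_pos (convex_Ici 0) (by fun_prop) fun t ht => ?_
    rw [interior_Ici] at ht
    have hd : HasDerivAt (fun t : ℝ => t * Real.cosh t - Real.sinh t)
        (1 * Real.cosh t + t * Real.sinh t - Real.cosh t) t :=
      ((hasDerivAt_id t).mul (Real.hasDerivAt_cosh t)).sub (Real.hasDerivAt_sinh t)
    rw [hd.deriv, one_mul, add_sub_cancel_left]
    exact mul_pos ht (Real.sinh_pos_iff.mpr ht)
  simpa using hmono Set.self_mem_Ici (Set.mem_Ici.mpr hs.le) hs

lemma coth_pos {s : ℝ} (hs : 0 < s) : 0 < coth s :=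
  div_pos (Real.cosh_pos s) (Real.sinh_pos_iff.mpr hs)

lemma inv_lt_coth {s : ℝ} (hs : 0 < s) : s⁻¹ < coth s := by
  rw [coth, inv_eq_one_div, div_lt_div_iff₀ hs (Real.sinh_pos_iff.mpr hs), one_mul,
    mul_comm (Real.cosh s)]
  exact Real.sinh_lt_mul_cosh hs

lemma div_le_of_coth_mul_le {s a K : ℝ} (hs : 0 < s) (ha : 0 < a) (h : coth s * a ≤ K) :
    a / K ≤ s := by
  have hlt : a / s < K := calc
    a / s = s⁻¹ * a := by rw [div_eq_inv_mul]
    _ < coth s * a := mul_lt_mul_of_pos_right (inv_lt_coth hs) ha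
    _ ≤ K := h
  have hK : 0 < K := (div_pos ha hs).trans hlt
  rw [div_le_iff₀ hK]
  rw [div_lt_iff₀ hs] at hlt
  linarith

lemma mul_inner_le_of_norm_sum_smul_le {E : Type*} [NormedAddCommGroup E]
    [InnerProductSpace ℝ E] {s : Finset E} {w : E → ℝ} {v : E} {M : ℝ}
    (hpos : ∀ β ∈ s, 0 ≤ w β * ⟪β, v⟫) (hM : ‖∑ β ∈ s, w β • β‖ ≤ M) {α : E} (hα : α ∈ s) :
    w α * ⟪α, v⟫ ≤ M * ‖v‖ := calc
  w α * ⟪α, v⟫ ≤ ∑ β ∈ s, w β * ⟪β, v⟫ := Finset.single_le_sum hpos hα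
  _ = ⟪∑ β ∈ s, w β • β, v⟫ := by simp only [sum_inner, real_inner_smul_left]
  _ ≤ ‖∑ β ∈ s, w β • β‖ * ‖v‖ := real_inner_le_norm _ _
  _ ≤ M * ‖v‖ := mul_le_mul_of_nonneg_right hM (norm_nonneg v)

lemma Finset.exists_pos_forall_le {ι : Type*} (s : Finset ι) {f : ι → ℝ}
    (hf : ∀ i ∈ s, 0 < f i) : ∃ δ, 0 < δ ∧ ∀ i ∈ s, δ ≤ f i := by
  rcases s.eq_empty_or_nonempty with rfl | hs
  · exact ⟨1, one_pos, by simp⟩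
  · exact ⟨s.inf' hs f, (Finset.lt_inf'_iff hs).mpr hf, fun i hi => Finset.inf'_le f hi⟩

theorem stmt0_general {E : Type*} [NormedAddCommGroup E] [InnerProductSpace ℝ E]
    (Φ : Finset E)
    (v : E) (hv : ∀ α ∈ Φ, 0 < ⟪α, v⟫) :
    ∀ M : ℝ, 0 < M → ∃ δ₀ : ℝ, 0 < δ₀ ∧
      ∀ x : E, (∀ α ∈ Φ, 0 < ⟪α, x⟫) →
        ‖∑ α ∈ Φ, coth ⟪α, x⟫ • α‖ ≤ M →
        ∀ α ∈ Φ, δ₀ ≤ ⟪α, x⟫ := by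
  intro M hM
  have hbound_pos : ∀ α ∈ Φ, 0 < ⟪α, v⟫ / (M * ‖v‖) := fun α hα => by
    have hv0 : v ≠ 0 := by rintro rfl; simpa using hv α hα
    exact div_pos (hv α hα) (mul_pos hM (norm_pos_iff.mpr hv0))
  obtain ⟨δ₀, hδ₀, hδ₀_le⟩ := Φ.exists_pos_forall_le hbound_pos
  refine ⟨δ₀, hδ₀, fun x hx hsum α hα => (hδ₀_le α hα).trans ?_⟩
  refine div_le_of_coth_mul_le (hx α hα) (hv α hα) ?_
  exact mul_inner_le_of_norm_sum_smul_le
    (fun β hβ => (mul_pos (coth_pos (hx β hβ)) (hv β hβ)).le) hsum hα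

/-- If a finite set `Φ` of nonzero vectors lies in a common open half-space
(determined by `v`), then boundedness of `‖∑ coth⟨α,x⟩ • α‖` forces `x` to stay
at a uniform distance from the walls `⟨α, ·⟩ = 0`. -/
theorem stmt0 {E : Type*} [NormedAddCommGroup E] [InnerProductSpace ℝ E]
    [FiniteDimensional ℝ E]
    (Φ : Finset E) (hΦ : ∀ α ∈ Φ, α ≠ 0)
    (v : E) (hv : ∀ α ∈ Φ, 0 < ⟪α, v⟫) :
    ∀ M : ℝ, 0 < M → ∃ δ₀ : ℝ, 0 < δ₀ ∧
      ∀ x : E, (∀ α ∈ Φ, 0 < ⟪α, x⟫) →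
        ‖∑ α ∈ Φ, coth ⟪α, x⟫ • α‖ ≤ M →
        ∀ α ∈ Φ, δ₀ ≤ ⟪α, x⟫ :=
  stmt0_general Φ v hv
end

section
/- Let E be a finite-dimensional real inner product space, Φ₊ a finite set of nonzero vectors of E, δ₀ > 0, and let (x_i)_{i∈ℕ} be a sequence in E with ⟨α, x_i⟩ ≥ δ₀ for every i and every α ∈ Φ₊. Then there exist a subset Φ_u ⊆ Φ₊, a constant A > 0, and a strictly increasing sequence of indices (i_j) such that ⟨β, x_{i_j}⟩ → +∞ as j → ∞ for every β ∈ Φ_u, while δ₀ ≤ ⟨α', x_{i_j}⟩ ≤ A for every j and every α' ∈ Φ₊ \ Φ_u. -/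
open scoped RealInnerProductSpace
open Filter

/-- If a real sequence is unbounded above, there is a strictly monotone
subsequence along which it tends to `+∞`. -/
lemma aux_subseq (f : ℕ → ℝ) (h : ∀ B : ℝ, ∃ j, B < f j) :
    ∃ ψ : ℕ → ℕ, StrictMono ψ ∧ Tendsto (fun j => f (ψ j)) atTop atTop := by
  have hfreq : ∀ n : ℕ, ∃ᶠ k in atTop, (n : ℝ) ≤ f k := by
    intro n
    rw [frequently_atTop]
    intro N
    obtain ⟨j, hj⟩ := h (((Finset.range (N + 1)).image f).max' (by simp) ⊔ (n : ℝ))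
    refine ⟨j, ?_, le_of_lt (lt_of_le_of_lt le_sup_right hj)⟩
    by_contra hjN
    push_neg at hjN
    have : f j ≤ ((Finset.range (N + 1)).image f).max' (by simp) :=
      Finset.le_max' _ _ (Finset.mem_image_of_mem f (by simp; omega))
    exact absurd hj (not_lt.2 (le_sup_of_le_left this))
  obtain ⟨ψ, hψ, hP⟩ := Filter.extraction_forall_of_frequently hfreq
  exact ⟨ψ, hψ, tendsto_atTop_mono hP tendsto_natCast_atTop_atTop⟩

/-- Dichotomy along a subsequence: the pairings of a sequence with the positive
roots split into those tending to `+∞` and those remaining in a fixed compact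
interval `[δ₀, A]`. -/
theorem stmt1 {E : Type*} [NormedAddCommGroup E] [InnerProductSpace ℝ E]
    [FiniteDimensional ℝ E]
    (Φ : Finset E) (hΦ : ∀ α ∈ Φ, α ≠ 0)
    (δ₀ : ℝ) (hδ₀ : 0 < δ₀)
    (x : ℕ → E) (hx : ∀ i, ∀ α ∈ Φ, δ₀ ≤ ⟪α, x i⟫) :
    ∃ Φu ⊆ Φ, ∃ A : ℝ, 0 < A ∧ ∃ φ : ℕ → ℕ, StrictMono φ ∧
      (∀ β ∈ Φu, Tendsto (fun j => ⟪β, x (φ j)⟫) atTop atTop) ∧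
      (∀ α' ∈ Φ, α' ∉ Φu → ∀ j : ℕ, δ₀ ≤ ⟪α', x (φ j)⟫ ∧ ⟪α', x (φ j)⟫ ≤ A) := by
  clear hΦ
  classical
  induction Φ using Finset.induction_on with
  | empty =>
      exact ⟨∅, Finset.Subset.refl _, 1, one_pos, id, strictMono_id,
        fun β hβ => absurd hβ (Finset.notMem_empty β),
        fun α' hα' _ _ => absurd hα' (Finset.notMem_empty α')⟩
  | @insert a s ha ih =>
      obtain ⟨Φu, hsub, A, hA, φ, hφ, htend, hbdd⟩ :=
        ih (fun i α hα => hx i α (Finset.mem_insert_of_mem hα))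
      by_cases hb : ∃ B : ℝ, ∀ j, ⟪a, x (φ j)⟫ ≤ B
      · obtain ⟨B, hB⟩ := hb
        refine ⟨Φu, hsub.trans (Finset.subset_insert a s), A ⊔ B,
          lt_of_lt_of_le hA le_sup_left, φ, hφ, htend, ?_⟩
        intro α' hα' hα'u j
        rcases Finset.mem_insert.1 hα' with rfl | hα's
        · exact ⟨hx _ _ (Finset.mem_insert_self _ _), le_sup_of_le_right (hB j)⟩
        · exact ⟨(hbdd α' hα's hα'u j).1, le_sup_of_le_left (hbdd α' hα's hα'u j).2⟩
      · push_neg at hb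
        obtain ⟨ψ, hψ, htψ⟩ := aux_subseq (fun j => ⟪a, x (φ j)⟫) hb
        refine ⟨insert a Φu, Finset.insert_subset_insert a hsub, A, hA,
          φ ∘ ψ, hφ.comp hψ, ?_, ?_⟩
        · intro β hβ
          rcases Finset.mem_insert.1 hβ with rfl | hβu
          · exact htψ
          · exact (htend β hβu).comp hψ.tendsto_atTop
        · intro α' hα' hα'u j
          have h1 : α' ≠ a := fun h => hα'u (h ▸ Finset.mem_insert_self a Φu)
          have h2 : α' ∈ s := (Finset.mem_insert.1 hα').resolve_left h1
          have h3 : α' ∉ Φu := fun h => hα'u (Finset.mem_insert_of_mem h)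
          exact hbdd α' h2 h3 (ψ j)
end

section
/- Let n ≥ 1, x₀ ∈ ℝⁿ, κ > 0 and λ > 0. Let w : ℝⁿ → ℝ be convex, twice continuously differentiable on an open neighborhood of the closed ball B̄(x₀, κ), with Hessian satisfying Hess w(x) ≥ λ·Id (as quadratic forms) for all x ∈ B̄(x₀, κ), and suppose w attains its global minimum over ℝⁿ at x₀. Let w' : ℝⁿ → ℝ be convex with |w(x) − w'(x)| ≤ λκ²/16 for all x ∈ B̄(x₀, κ). Then w' attains its global minimum over ℝⁿ at some point of the open ball B(x₀, κ). -/
/-!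
Along the segment from `x₀` to a point `z` with `‖z - x₀‖ = κ`, the function `w` has zero
derivative at `x₀` and second derivative at least `λκ²`, so `w z ≥ w x₀ + λκ²/2`. A perturbation
of size `λκ²/16` cannot close this gap, so `w' x₀ < w' z` on the whole sphere; the minimum of `w'`
over the compact closed ball therefore lies in the open ball, and a local minimum of a convex
function is global.
-/

open Metric Set

theorem monotoneOn_Icc_of_hasDerivAt_nonneg {f f' : ℝ → ℝ} {a b : ℝ}
    (hf : ∀ t ∈ Icc a b, HasDerivAt f (f' t) t) (hf' : ∀ t ∈ Icc a b, 0 ≤ f' t) :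
    MonotoneOn f (Icc a b) :=
  monotoneOn_of_hasDerivWithinAt_nonneg (convex_Icc a b)
    (fun t ht => (hf t ht).continuousAt.continuousWithinAt)
    (fun t ht => (hf t (interior_subset ht)).hasDerivWithinAt)
    (fun t ht => hf' t (interior_subset ht))

theorem add_half_le_of_hasDerivAt_of_le {g g' g'' : ℝ → ℝ} {m : ℝ}
    (hg : ∀ t ∈ Icc (0 : ℝ) 1, HasDerivAt g (g' t) t)
    (hg' : ∀ t ∈ Icc (0 : ℝ) 1, HasDerivAt g' (g'' t) t)
    (h₀ : g' 0 = 0) (hm : ∀ t ∈ Icc (0 : ℝ) 1, m ≤ g'' t) :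
    g 0 + m / 2 ≤ g 1 := by
  have hslope : ∀ t ∈ Icc (0 : ℝ) 1, m * t ≤ g' t := by
    have hmono : MonotoneOn (fun t => g' t - m * t) (Icc 0 1) :=
      monotoneOn_Icc_of_hasDerivAt_nonneg
        (fun t ht => (hg' t ht).sub ((hasDerivAt_id t).const_mul m))
        (fun t ht => by simpa using hm t ht)
    intro t ht
    simpa [h₀] using hmono (left_mem_Icc.2 zero_le_one) ht ht.1
  have hmono : MonotoneOn (fun t => g t - m / 2 * t ^ 2) (Icc 0 1) :=
    monotoneOn_Icc_of_hasDerivAt_nonneg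
      (fun t ht => (hg t ht).sub (((hasDerivAt_id t).pow 2).const_mul (m / 2)))
      (fun t ht => by have := hslope t ht; simp only [id, Nat.cast_ofNat]; linarith)
  have := hmono (left_mem_Icc.2 zero_le_one) (right_mem_Icc.2 zero_le_one) zero_le_one
  simp only at this
  linarith

theorem add_half_mul_norm_sub_sq_le_of_fderiv_eq_zero {E : Type*} [NormedAddCommGroup E]
    [NormedSpace ℝ E] {w : E → ℝ} {U : Set E} {x z : E} {lam : ℝ} (hU : IsOpen U)
    (hw : ContDiffOn ℝ 2 w U) (hxz : segment ℝ x z ⊆ U) (hx : fderiv ℝ w x = 0)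
    (hhess : ∀ y ∈ segment ℝ x z,
      lam * ‖z - x‖ ^ 2 ≤ iteratedFDeriv ℝ 2 w y ![z - x, z - x]) :
    w x + lam / 2 * ‖z - x‖ ^ 2 ≤ w z := by
  set c := AffineMap.lineMap (k := ℝ) x z
  have hcU : ∀ t ∈ Icc (0 : ℝ) 1, U ∈ nhds (c t) := fun t ht =>
    hU.mem_nhds (hxz (lineMap_mem_segment ℝ x z ht))
  have hw' : DifferentiableOn ℝ (fderiv ℝ w) U :=
    (hw.fderiv_of_isOpen hU (by norm_num)).differentiableOn one_ne_zero
  have key := add_half_le_of_hasDerivAt_of_le (g := w ∘ c)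
    (g' := fun t => fderiv ℝ w (c t) (z - x))
    (g'' := fun t => fderiv ℝ (fderiv ℝ w) (c t) (z - x) (z - x)) (m := lam * ‖z - x‖ ^ 2)
    (fun t ht => ((hw.differentiableOn two_ne_zero).differentiableAt (hcU t ht)).hasFDerivAt
      |>.comp_hasDerivAt t AffineMap.hasDerivAt_lineMap)
    (fun t ht => ((ContinuousLinearMap.apply ℝ ℝ (z - x)).hasFDerivAt.comp (c t)
      ((hw'.differentiableAt (hcU t ht)).hasFDerivAt)).comp_hasDerivAt t
        AffineMap.hasDerivAt_lineMap)
    (by simp [c, hx])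
    (fun t ht => by
      simpa [iteratedFDeriv_two_apply] using hhess (c t) (lineMap_mem_segment ℝ x z ht))
  simp only [Function.comp_apply, c, AffineMap.lineMap_apply_zero,
    AffineMap.lineMap_apply_one] at key
  linarith

theorem ConvexOn.exists_isMinOn_univ_mem_ball {E : Type*} [NormedAddCommGroup E]
    [NormedSpace ℝ E] [FiniteDimensional ℝ E] {f : E → ℝ} (hf : ConvexOn ℝ univ f) {x₀ : E}
    {κ : ℝ} (hκ : 0 ≤ κ) (hsphere : ∀ z ∈ sphere x₀ κ, f x₀ < f z) :
    ∃ y ∈ ball x₀ κ, IsMinOn f univ y := by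
  obtain ⟨y, hyB, hymin⟩ := (isCompact_closedBall x₀ κ).exists_isMinOn
    (nonempty_closedBall.2 hκ) ((hf.continuousOn isOpen_univ).mono (subset_univ _))
  have hy : y ∈ ball x₀ κ := by
    refine (mem_closedBall.1 hyB).lt_of_ne fun hyκ => ?_
    exact (hsphere y hyκ).not_ge (hymin (mem_closedBall_self hκ))
  refine ⟨y, hy, fun x _ => IsMinOn.of_isLocalMin_of_convex_univ ?_ hf x⟩
  exact Filter.mem_of_superset (isOpen_ball.mem_nhds hy)
    fun x hx => hymin (ball_subset_closedBall hx)

theorem stmt6_general (n : ℕ) (x₀ : EuclideanSpace ℝ (Fin n))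
    (κ lam : ℝ) (hκ : 0 < κ) (hlam : 0 < lam)
    (w : EuclideanSpace ℝ (Fin n) → ℝ)
    (hsmooth : ∃ U : Set (EuclideanSpace ℝ (Fin n)),
      IsOpen U ∧ closedBall x₀ κ ⊆ U ∧ ContDiffOn ℝ 2 w U)
    (hhess : ∀ x ∈ closedBall x₀ κ, ∀ v : EuclideanSpace ℝ (Fin n),
      lam * ‖v‖ ^ 2 ≤ iteratedFDeriv ℝ 2 w x ![v, v])
    (hmin : ∀ x, w x₀ ≤ w x)
    (w' : EuclideanSpace ℝ (Fin n) → ℝ)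
    (hw'conv : ConvexOn ℝ Set.univ w')
    (hclose : ∀ x ∈ closedBall x₀ κ, |w x - w' x| ≤ lam * κ ^ 2 / 16) :
    ∃ y ∈ ball x₀ κ, ∀ x, w' y ≤ w' x := by
  obtain ⟨U, hU, hBU, hw⟩ := hsmooth
  have hx₀ : x₀ ∈ closedBall x₀ κ := mem_closedBall_self hκ.le
  have hgrowth : ∀ z ∈ sphere x₀ κ, w x₀ + lam / 2 * κ ^ 2 ≤ w z := by
    intro z hz
    have hzκ : ‖z - x₀‖ = κ := by rwa [← dist_eq_norm]
    have hseg : segment ℝ x₀ z ⊆ closedBall x₀ κ :=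
      (convex_closedBall x₀ κ).segment_subset hx₀ (sphere_subset_closedBall hz)
    simpa [hzκ] using add_half_mul_norm_sub_sq_le_of_fderiv_eq_zero hU hw (hseg.trans hBU)
      (IsLocalMin.fderiv_eq_zero (Filter.Eventually.of_forall hmin))
      (fun y hy => hhess y (hseg hy) (z - x₀))
  obtain ⟨y, hy, hymin⟩ := hw'conv.exists_isMinOn_univ_mem_ball hκ.le fun z hz => by
    have hz' := abs_le.1 (hclose z (sphere_subset_closedBall hz))
    have hx₀' := abs_le.1 (hclose x₀ hx₀)
    linarith [hgrowth z hz, mul_pos hlam (pow_pos hκ 2)]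
  exact ⟨y, hy, fun x => hymin (mem_univ x)⟩

/-- If a convex function `w` on `ℝⁿ` is `C²` near the closed ball `B̄(x₀, κ)`
with Hessian `≥ λ·Id` there and attains its global minimum at `x₀`, then any
convex function `w'` with `|w - w'| ≤ λκ²/16` on the closed ball attains its
global minimum at a point of the open ball `B(x₀, κ)`. -/
theorem stmt6 (n : ℕ) (hn : 1 ≤ n) (x₀ : EuclideanSpace ℝ (Fin n))
    (κ lam : ℝ) (hκ : 0 < κ) (hlam : 0 < lam)
    (w : EuclideanSpace ℝ (Fin n) → ℝ)
    (hwconv : ConvexOn ℝ Set.univ w)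
    (hsmooth : ∃ U : Set (EuclideanSpace ℝ (Fin n)),
      IsOpen U ∧ closedBall x₀ κ ⊆ U ∧ ContDiffOn ℝ 2 w U)
    (hhess : ∀ x ∈ closedBall x₀ κ, ∀ v : EuclideanSpace ℝ (Fin n),
      lam * ‖v‖ ^ 2 ≤ iteratedFDeriv ℝ 2 w x ![v, v])
    (hmin : ∀ x, w x₀ ≤ w x)
    (w' : EuclideanSpace ℝ (Fin n) → ℝ)
    (hw'conv : ConvexOn ℝ Set.univ w')
    (hclose : ∀ x ∈ closedBall x₀ κ, |w x - w' x| ≤ lam * κ ^ 2 / 16) :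
    ∃ y ∈ ball x₀ κ, ∀ x, w' y ≤ w' x :=
  stmt6_general n x₀ κ lam hκ hlam w hsmooth hhess hmin w' hw'conv hclose
end

section
/- Let E be a finite-dimensional real inner product space, Φ₊ a finite set of nonzero vectors of E, and let a₊ = {x ∈ E : ⟨α, x⟩ > 0 for all α ∈ Φ₊} and j(x) = −2 Σ_{α∈Φ₊} log sinh⟨α, x⟩ for x ∈ a₊. Fix constants δ₀, M, D, k > 0 and a subset S ⊆ Φ₊. Then there exists ε > 0, depending only on Φ₊, δ₀, M, D and k, with the following property: for every convex differentiable function ψ : a₊ → ℝ with ‖∇ψ(x)‖ ≤ M for all x ∈ a₊, every x₀ ∈ a₊ with ⟨α, x₀⟩ ≥ δ₀ for all α ∈ Φ₊, and every x ∈ a₊ with ‖x − x₀‖ ≤ D and (ψ + j)(x) ≤ (ψ + j)(x₀) + k, one has ⟨α', x⟩ ≥ ε for every α' ∈ S. -/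
open scoped RealInnerProductSpace

/-!
Since `‖∇ψ‖ ≤ M` on the convex cone `a₊`, `ψ` is `M`-Lipschitz there, so `ψ x₀ - ψ x ≤ M D` and
the sublevel condition makes `∑ α, log sinh ⟪α, x⟫` at most `(k + M D) / 2` below its value at
`x₀`. From `e^t (1 - e^{-2δ}) / 2 ≤ sinh t ≤ e^t / 2` for `t ≥ δ`, each single term
`log sinh ⟪α, x⟫` exceeds its value at `x₀` by at most `‖α‖ D - log (1 - e^{-2δ₀})`.
Hence no term can drop by more than a constant depending only on `Φ₊, δ₀, M, D, k`, and
`log sinh ⟪α', x₀⟫ ≥ log sinh δ₀` bounds `⟪α', x⟫` from below.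
-/

namespace Real

lemma sinh_mul_one_sub_exp_le {δ a : ℝ} (t : ℝ) (hδ : 0 ≤ δ) (ha : δ ≤ a) :
    sinh t * (1 - exp (-(2 * δ))) ≤ exp (t - a) * sinh a := by
  have hsinh : sinh t ≤ exp t / 2 := by
    rw [sinh_eq]; linarith [exp_pos (-t)]
  have hδ' : exp (-(2 * δ)) ≤ 1 := exp_le_one_iff.2 (by linarith)
  have ha' : exp (-(2 * a)) ≤ exp (-(2 * δ)) := exp_le_exp.2 (by linarith)
  have hrhs : exp (t - a) * sinh a = exp t * (1 - exp (-(2 * a))) / 2 := by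
    have h1 : exp (t - a) * exp a = exp t := by rw [← exp_add]; ring_nf
    have h2 : exp (t - a) * exp (-a) = exp t * exp (-(2 * a)) := by
      rw [← exp_add, ← exp_add]; ring_nf
    rw [sinh_eq]; linear_combination h1 / 2 - h2 / 2
  rw [hrhs]
  nlinarith [exp_pos t]

lemma log_sinh_le_log_sinh_add {δ a t : ℝ} (hδ : 0 < δ) (ha : δ ≤ a) (ht : 0 < t) :
    log (sinh t) ≤ log (sinh a) + (t - a) - log (1 - exp (-(2 * δ))) := by
  have hc : 0 < 1 - exp (-(2 * δ)) := sub_pos.2 (exp_lt_one_iff.2 (by linarith))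
  have hsa : 0 < sinh a := sinh_pos_iff.2 (hδ.trans_le ha)
  have h := log_le_log (mul_pos (sinh_pos_iff.2 ht) hc) (sinh_mul_one_sub_exp_le t hδ.le ha)
  rw [log_mul (sinh_pos_iff.2 ht).ne' hc.ne', log_mul (exp_pos _).ne' hsa.ne', log_exp] at h
  linarith

lemma arsinh_exp_le_of_le_log_sinh {b t : ℝ} (ht : 0 < t) (h : b ≤ log (sinh t)) :
    arsinh (exp b) ≤ t := by
  rw [← arsinh_sinh t, arsinh_le_arsinh, ← exp_log (sinh_pos_iff.2 ht)]
  exact exp_le_exp.2 h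

end Real

section

variable {E : Type*} [NormedAddCommGroup E] [InnerProductSpace ℝ E]

lemma convex_setOf_forall_inner_pos (Φ : Set E) : Convex ℝ {x : E | ∀ α ∈ Φ, 0 < ⟪α, x⟫} := by
  simp only [Set.ofPred_forall]
  exact convex_iInter₂ fun α _ => convex_halfSpace_gt (innerₛₗ ℝ α).isLinear 0

lemma Convex.norm_image_sub_le_of_norm_gradient_le [CompleteSpace E] {f : E → ℝ} {s : Set E}
    {C : ℝ} {x y : E} (hs : Convex ℝ s) (hf : ∀ x ∈ s, DifferentiableAt ℝ f x)
    (bound : ∀ x ∈ s, ‖gradient f x‖ ≤ C) (xs : x ∈ s) (ys : y ∈ s) :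
    ‖f y - f x‖ ≤ C * ‖y - x‖ :=
  hs.norm_image_sub_le_of_norm_fderiv_le hf
    (fun z hz => ((InnerProductSpace.toDual ℝ E).symm.norm_map _).symm.trans_le (bound z hz)) xs ys

lemma log_sinh_inner_le {δ : ℝ} {α x₀ x : E} (hδ : 0 < δ) (hx₀ : δ ≤ ⟪α, x₀⟫) (hx : 0 < ⟪α, x⟫) :
    Real.log (Real.sinh ⟪α, x⟫) ≤
      Real.log (Real.sinh ⟪α, x₀⟫) + ‖α‖ * ‖x - x₀‖ - Real.log (1 - Real.exp (-(2 * δ))) := by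
  have h := Real.log_sinh_le_log_sinh_add hδ hx₀ hx
  have hα : ⟪α, x⟫ - ⟪α, x₀⟫ ≤ ‖α‖ * ‖x - x₀‖ := by
    rw [← inner_sub_right]; exact real_inner_le_norm α _
  linarith

lemma log_sinh_sub_le_log_sinh_inner {Φ : Finset E} {δ D : ℝ} {x₀ x α' : E} (hδ : 0 < δ)
    (hx₀ : ∀ α ∈ Φ, δ ≤ ⟪α, x₀⟫) (hx : ∀ α ∈ Φ, 0 < ⟪α, x⟫) (hD : ‖x - x₀‖ ≤ D) (hα' : α' ∈ Φ) :
    Real.log (Real.sinh δ)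
        - (∑ α ∈ Φ, Real.log (Real.sinh ⟪α, x₀⟫) - ∑ α ∈ Φ, Real.log (Real.sinh ⟪α, x⟫))
        - ∑ α ∈ Φ, (‖α‖ * D - Real.log (1 - Real.exp (-(2 * δ))))
      ≤ Real.log (Real.sinh ⟪α', x⟫) := by
  classical
  set c : E → ℝ := fun α => ‖α‖ * D - Real.log (1 - Real.exp (-(2 * δ)))
  have hc : ∀ α, 0 ≤ c α := fun α => by
    have hlog : Real.log (1 - Real.exp (-(2 * δ))) ≤ 0 :=
      Real.log_nonpos (sub_nonneg.2 (Real.exp_le_one_iff.2 (by linarith)))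
        (by linarith [Real.exp_pos (-(2 * δ))])
    have hnorm := mul_nonneg (norm_nonneg α) ((norm_nonneg _).trans hD)
    linarith
  have hothers : ∑ α ∈ Φ.erase α', Real.log (Real.sinh ⟪α, x⟫)
      ≤ ∑ α ∈ Φ.erase α', (Real.log (Real.sinh ⟪α, x₀⟫) + c α) := by
    refine Finset.sum_le_sum fun α hα => ?_
    have hαΦ := Finset.mem_of_mem_erase hα
    have hterm := log_sinh_inner_le hδ (hx₀ α hαΦ) (hx α hαΦ)
    have hdist := mul_le_mul_of_nonneg_left hD (norm_nonneg α)
    linarith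
  have hα'x₀ : Real.log (Real.sinh δ) ≤ Real.log (Real.sinh ⟪α', x₀⟫) :=
    Real.log_le_log (Real.sinh_pos_iff.2 hδ) (Real.sinh_le_sinh.2 (hx₀ α' hα'))
  have hcsum : ∑ α ∈ Φ.erase α', c α ≤ ∑ α ∈ Φ, c α :=
    Finset.sum_le_sum_of_subset_of_nonneg (Finset.erase_subset _ _) fun α _ _ => hc α
  rw [Finset.sum_add_distrib] at hothers
  rw [← Finset.sum_erase_add _ _ hα', ← Finset.sum_erase_add Φ _ hα']
  linarith

end

theorem stmt12_general {E : Type*} [NormedAddCommGroup E] [InnerProductSpace ℝ E]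
    [FiniteDimensional ℝ E]
    (Φ : Finset E)
    (aplus : Set E) (haplus : aplus = {x | ∀ α ∈ Φ, 0 < ⟪α, x⟫})
    (j : E → ℝ) (hj : ∀ x, j x = -2 * ∑ α ∈ Φ, Real.log (Real.sinh ⟪α, x⟫))
    (δ₀ M D k : ℝ) (hδ₀ : 0 < δ₀)
    (S : Finset E) (hS : S ⊆ Φ) :
    ∃ ε : ℝ, 0 < ε ∧
      ∀ ψ : E → ℝ, ConvexOn ℝ aplus ψ → (∀ x ∈ aplus, DifferentiableAt ℝ ψ x) →
        (∀ x ∈ aplus, ‖gradient ψ x‖ ≤ M) →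
        ∀ x₀ ∈ aplus, (∀ α ∈ Φ, δ₀ ≤ ⟪α, x₀⟫) →
          ∀ x ∈ aplus, ‖x - x₀‖ ≤ D → ψ x + j x ≤ ψ x₀ + j x₀ + k →
            ∀ α' ∈ S, ε ≤ ⟪α', x⟫ := by
  set B := Real.log (Real.sinh δ₀) - (k + M * D) / 2
    - ∑ α ∈ Φ, (‖α‖ * D - Real.log (1 - Real.exp (-(2 * δ₀)))) with hB
  refine ⟨Real.arsinh (Real.exp B), Real.arsinh_pos_iff.2 (Real.exp_pos B), ?_⟩
  subst haplus
  intro ψ _ hdiff hgrad x₀ hx₀ hx₀δ x hx hxD hw α' hα'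
  have hψ : ψ x₀ - ψ x ≤ M * D := calc
    ψ x₀ - ψ x ≤ ‖ψ x₀ - ψ x‖ := Real.le_norm_self _
    _ ≤ M * ‖x₀ - x‖ :=
        (convex_setOf_forall_inner_pos (Φ : Set E)).norm_image_sub_le_of_norm_gradient_le
          hdiff hgrad hx hx₀
    _ ≤ M * D := by
        rw [norm_sub_rev]
        exact mul_le_mul_of_nonneg_left hxD ((norm_nonneg _).trans (hgrad x₀ hx₀))
  rw [hj, hj] at hw
  have hsinh := log_sinh_sub_le_log_sinh_inner hδ₀ hx₀δ hx hxD (hS hα')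
  exact Real.arsinh_exp_le_of_le_log_sinh (hx α' (hS hα')) (by rw [hB]; linarith)

/-- Quantitative version of Lemma 3.2: points of a bounded sublevel set of
`w = ψ + j` around a point `x₀` at distance `≥ δ₀` from the Weyl walls stay at
a uniform distance `ε` (depending only on `Φ₊, δ₀, M, D, k`) from the walls. -/
theorem stmt12 {E : Type*} [NormedAddCommGroup E] [InnerProductSpace ℝ E]
    [FiniteDimensional ℝ E]
    (Φ : Finset E) (hΦ0 : ∀ α ∈ Φ, α ≠ 0)
    (aplus : Set E) (haplus : aplus = {x | ∀ α ∈ Φ, 0 < ⟪α, x⟫})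
    (j : E → ℝ) (hj : ∀ x, j x = -2 * ∑ α ∈ Φ, Real.log (Real.sinh ⟪α, x⟫))
    (δ₀ M D k : ℝ) (hδ₀ : 0 < δ₀) (hM : 0 < M) (hD : 0 < D) (hk : 0 < k)
    (S : Finset E) (hS : S ⊆ Φ) :
    ∃ ε : ℝ, 0 < ε ∧
      ∀ ψ : E → ℝ, ConvexOn ℝ aplus ψ → (∀ x ∈ aplus, DifferentiableAt ℝ ψ x) →
        (∀ x ∈ aplus, ‖gradient ψ x‖ ≤ M) →
        ∀ x₀ ∈ aplus, (∀ α ∈ Φ, δ₀ ≤ ⟪α, x₀⟫) →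
          ∀ x ∈ aplus, ‖x - x₀‖ ≤ D → ψ x + j x ≤ ψ x₀ + j x₀ + k →
            ∀ α' ∈ S, ε ≤ ⟪α', x⟫ :=
  stmt12_general Φ aplus haplus j hj δ₀ M D k hδ₀ S hS
end

section
/- Let x : [0, ∞) → ℝⁿ be a function and let κ > 0, ε₀ > 0 be such that ‖x(s) − x(t)‖ ≤ κ whenever s, t ∈ [0, ∞) satisfy |s − t| ≤ ε₀. Then there exists a continuously differentiable function y : [0, ∞) → ℝⁿ such that ‖y(t) − x(t)‖ ≤ 2κ and ‖y'(t)‖ ≤ 2κ/ε₀ for all t ≥ 0. -/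
/-!
Sample `x` on the lattice `ε₀ ℕ` to get a step function `g`, and smooth it by taking the
moving average `A` over windows of length `ε₀` twice: `z = A g` is continuous, and `y = A z` is `C¹`
with `y' t = (z (t + ε₀) - z t) / ε₀`. Every sample entering `y t` is taken at a lattice point
within `2 ε₀` of `t`, so `‖y t - x t‖ ≤ 2κ`; and `g (u + ε₀) - g u` is a single lattice step of
`x`, of norm at most `κ`, which averaging preserves, so `‖y' t‖ ≤ κ / ε₀`.
-/

open MeasureTheory intervalIntegral Set

section MovingAverage

variable {E : Type*} [NormedAddCommGroup E] [NormedSpace ℝ E]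

noncomputable def movingAverage (h : ℝ) (f : ℝ → E) (t : ℝ) : E :=
  h⁻¹ • ∫ s in t..t + h, f s

variable {h : ℝ} {f : ℝ → E}

lemma movingAverage_eq_inv_smul_sub_primitive (hf : ∀ a b, IntervalIntegrable f volume a b)
    (t : ℝ) :
    movingAverage h f t =
      h⁻¹ • ((∫ s in (0 : ℝ)..t + h, f s) - ∫ s in (0 : ℝ)..t, f s) := by
  rw [movingAverage, integral_interval_sub_left (hf _ _) (hf _ _)]

lemma continuous_movingAverage (hf : ∀ a b, IntervalIntegrable f volume a b) :
    Continuous (movingAverage h f) := by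
  simp only [funext (movingAverage_eq_inv_smul_sub_primitive hf)]
  have hF := continuous_primitive hf 0
  exact ((hF.comp (continuous_add_const h)).sub hF).const_smul _

lemma hasDerivAt_movingAverage [CompleteSpace E] (hf : Continuous f) (t : ℝ) :
    HasDerivAt (movingAverage h f) (h⁻¹ • (f (t + h) - f t)) t := by
  simp only [funext (movingAverage_eq_inv_smul_sub_primitive fun a b => hf.intervalIntegrable a b)]
  have hF (u : ℝ) : HasDerivAt (fun v => ∫ s in (0 : ℝ)..v, f s) (f u) u :=
    (hf.integral_hasStrictDerivAt 0 u).hasDerivAt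
  exact (((hF (t + h)).comp_add_const t h).sub (hF t)).const_smul _

lemma contDiff_one_movingAverage [CompleteSpace E] (hf : Continuous f) :
    ContDiff ℝ 1 (movingAverage h f) := by
  rw [contDiff_one_iff_deriv]
  refine ⟨fun t => (hasDerivAt_movingAverage hf t).differentiableAt, ?_⟩
  rw [funext fun t => (hasDerivAt_movingAverage (h := h) hf t).deriv]
  exact ((hf.comp (continuous_add_const h)).sub hf).const_smul _

lemma norm_movingAverage_sub_le [CompleteSpace E] (hh : 0 < h) {t M : ℝ} {c : E}
    (hf : IntervalIntegrable f volume t (t + h)) (hM : ∀ s ∈ Ioc t (t + h), ‖f s - c‖ ≤ M) :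
    ‖movingAverage h f t - c‖ ≤ M := by
  have hmean : movingAverage h f t - c = h⁻¹ • ∫ s in t..t + h, (f s - c) := by
    rw [integral_sub hf intervalIntegrable_const, intervalIntegral.integral_const,
      add_sub_cancel_left, smul_sub, smul_smul, inv_mul_cancel₀ hh.ne', one_smul, movingAverage]
  have hint : ‖∫ s in t..t + h, (f s - c)‖ ≤ M * h := by
    simpa [abs_of_pos hh] using norm_integral_le_of_norm_le_const (a := t) (b := t + h)
      fun s hs => hM s (by rwa [uIoc_of_le (by linarith)] at hs)
  rw [hmean, norm_smul, norm_inv, Real.norm_of_nonneg hh.le, inv_mul_le_iff₀ hh]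
  linarith

lemma movingAverage_add_sub (hf : ∀ a b, IntervalIntegrable f volume a b) (t a : ℝ) :
    movingAverage h f (t + a) - movingAverage h f t =
      movingAverage h (fun s => f (s + a) - f s) t := by
  have hshift : IntervalIntegrable (fun s => f (s + a)) volume t (t + h) :=
    (IntervalIntegrable.comp_add_right_iff).mpr (hf _ _)
  rw [movingAverage, movingAverage, movingAverage, integral_sub hshift (hf _ _),
    integral_comp_add_right, smul_sub, add_right_comm]

lemma norm_movingAverage_add_sub_le [CompleteSpace E] (hh : 0 < h)
    (hf : ∀ a b, IntervalIntegrable f volume a b) {t a M : ℝ}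
    (hM : ∀ s ∈ Ioc t (t + h), ‖f (s + a) - f s‖ ≤ M) :
    ‖movingAverage h f (t + a) - movingAverage h f t‖ ≤ M := by
  rw [movingAverage_add_sub hf, ← sub_zero (movingAverage h _ t)]
  refine norm_movingAverage_sub_le hh ?_ fun s hs => by simpa using hM s hs
  exact (IntervalIntegrable.comp_add_right_iff).mpr (hf _ _) |>.sub (hf _ _)

lemma norm_deriv_movingAverage_le [CompleteSpace E] (hh : 0 < h) (hf : Continuous f)
    {t M : ℝ} (hM : ‖f (t + h) - f t‖ ≤ M) : ‖deriv (movingAverage h f) t‖ ≤ M / h := by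
  rw [(hasDerivAt_movingAverage hf t).deriv, norm_smul, norm_inv, Real.norm_of_nonneg hh.le,
    inv_mul_eq_div]
  gcongr

end MovingAverage

section LatticeSample

variable {E : Type*} [NormedAddCommGroup E]

-- For `s < 0` the truncated floor `⌊s / ε⌋₊` is `0`, so there the sample is `x 0`.
noncomputable def latticeSample (ε : ℝ) (x : ℝ → E) (s : ℝ) : E :=
  x (⌊s / ε⌋₊ * ε)

lemma intervalIntegrable_latticeSample (ε : ℝ) (x : ℝ → E) (a b : ℝ) :
    IntervalIntegrable (latticeSample ε x) volume a b := by
  obtain ⟨B, hB⟩ := isCompact_uIcc.bddAbove_image (continuous_id.div_const ε).continuousOn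
    (K := uIcc a b)
  have hmeas : StronglyMeasurable (latticeSample ε x) :=
    StronglyMeasurable.of_discrete.comp_measurable (f := fun k : ℕ => x (k * ε))
      (Nat.measurable_floor.comp (measurable_id.div_const ε))
  rw [intervalIntegrable_iff]
  refine Measure.integrableOn_of_bounded (M := ∑ k ∈ Finset.range (⌊B⌋₊ + 1), ‖x (k * ε)‖)
    measure_Ioc_lt_top.ne hmeas.aestronglyMeasurable ?_
  filter_upwards [ae_restrict_mem measurableSet_uIoc] with s hs
  have hk : ⌊s / ε⌋₊ < ⌊B⌋₊ + 1 :=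
    Nat.lt_succ_of_le (Nat.floor_mono (hB (mem_image_of_mem _ (uIoc_subset_uIcc hs))))
  exact Finset.single_le_sum (f := fun k : ℕ => ‖x (k * ε)‖) (fun _ _ => norm_nonneg _)
    (Finset.mem_range.mpr hk)

variable {x : ℝ → E} {κ ε : ℝ}

lemma norm_sub_le_two_mul_of_abs_sub_le_two_mul
    (hx : ∀ s t : ℝ, 0 ≤ s → 0 ≤ t → |s - t| ≤ ε → ‖x s - x t‖ ≤ κ) {s t : ℝ}
    (hs : 0 ≤ s) (ht : 0 ≤ t) (hst : |s - t| ≤ 2 * ε) : ‖x s - x t‖ ≤ 2 * κ := by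
  obtain ⟨m, hm⟩ : ∃ m, m = (s + t) / 2 := ⟨_, rfl⟩
  have hm0 : 0 ≤ m := by rw [hm]; positivity
  have hsm : |s - m| ≤ ε := by rw [abs_le] at hst ⊢; constructor <;> linarith
  have hmt : |m - t| ≤ ε := by rw [abs_le] at hst ⊢; constructor <;> linarith
  calc ‖x s - x t‖ ≤ ‖x s - x m‖ + ‖x m - x t‖ := norm_sub_le_norm_sub_add_norm_sub _ _ _
    _ ≤ 2 * κ := by linarith [hx s m hs hm0 hsm, hx m t hm0 ht hmt]

lemma norm_latticeSample_sub_le (hε : 0 < ε)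
    (hx : ∀ s t : ℝ, 0 ≤ s → 0 ≤ t → |s - t| ≤ ε → ‖x s - x t‖ ≤ κ) {t u : ℝ}
    (ht : 0 ≤ t) (htu : t ≤ u) (hut : u ≤ t + 2 * ε) :
    ‖latticeSample ε x u - x t‖ ≤ 2 * κ := by
  have hle : ⌊u / ε⌋₊ * ε ≤ u :=
    (le_div_iff₀ hε).mp (Nat.floor_le (div_nonneg (ht.trans htu) hε.le))
  have hlt : u < (⌊u / ε⌋₊ + 1) * ε := (div_lt_iff₀ hε).mp (Nat.lt_floor_add_one _)
  refine norm_sub_le_two_mul_of_abs_sub_le_two_mul hx (mul_nonneg (Nat.cast_nonneg _) hε.le) ht ?_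
  rw [abs_le]
  constructor <;> linarith

lemma norm_latticeSample_add_self_sub_le (hε : 0 < ε)
    (hx : ∀ s t : ℝ, 0 ≤ s → 0 ≤ t → |s - t| ≤ ε → ‖x s - x t‖ ≤ κ) {u : ℝ} (hu : 0 ≤ u) :
    ‖latticeSample ε x (u + ε) - latticeSample ε x u‖ ≤ κ := by
  have hfloor : ⌊(u + ε) / ε⌋₊ = ⌊u / ε⌋₊ + 1 := by
    rw [add_div, div_self hε.ne', Nat.floor_add_one (div_nonneg hu hε.le)]
  refine hx _ _ (mul_nonneg (Nat.cast_nonneg _) hε.le) (mul_nonneg (Nat.cast_nonneg _) hε.le) ?_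
  rw [hfloor]
  push_cast
  rw [add_mul, one_mul, add_sub_cancel_left, abs_of_pos hε]

end LatticeSample

theorem stmt14_general (n : ℕ) (x : ℝ → EuclideanSpace ℝ (Fin n))
    (κ ε₀ : ℝ) (hε₀ : 0 < ε₀)
    (hx : ∀ s t : ℝ, 0 ≤ s → 0 ≤ t → |s - t| ≤ ε₀ → ‖x s - x t‖ ≤ κ) :
    ∃ y : ℝ → EuclideanSpace ℝ (Fin n), ContDiff ℝ 1 y ∧
      ∀ t : ℝ, 0 ≤ t → ‖y t - x t‖ ≤ 2 * κ ∧ ‖deriv y t‖ ≤ 2 * κ / ε₀ := by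
  have hκ : 0 ≤ κ := by simpa using hx 0 0 le_rfl le_rfl (by simpa using hε₀.le)
  have hg := intervalIntegrable_latticeSample ε₀ x
  set z := movingAverage ε₀ (latticeSample ε₀ x)
  have hz : Continuous z := continuous_movingAverage hg
  refine ⟨movingAverage ε₀ z, contDiff_one_movingAverage hz, fun t ht => ⟨?_, ?_⟩⟩
  · refine norm_movingAverage_sub_le hε₀ (hz.intervalIntegrable _ _) fun s hs => ?_
    refine norm_movingAverage_sub_le hε₀ (hg _ _) fun u hu => ?_
    exact norm_latticeSample_sub_le hε₀ hx ht (by linarith [hs.1, hu.1]) (by linarith [hs.2, hu.2])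
  · have hzshift : ‖z (t + ε₀) - z t‖ ≤ κ := norm_movingAverage_add_sub_le hε₀ hg
      fun u hu => norm_latticeSample_add_self_sub_le hε₀ hx (by linarith [hu.1])
    calc ‖deriv (movingAverage ε₀ z) t‖ ≤ κ / ε₀ := norm_deriv_movingAverage_le hε₀ hz hzshift
      _ ≤ 2 * κ / ε₀ := by gcongr; linarith

/-- From a (possibly discontinuous) family `x : [0,∞) → ℝⁿ` moving at most `κ`
in any time interval of length `ε₀`, one can construct a `C¹` family `y` with
`‖y(t) - x(t)‖ ≤ 2κ` and `‖y'(t)‖ ≤ 2κ/ε₀` for all `t ≥ 0`. -/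
theorem stmt14 (n : ℕ) (x : ℝ → EuclideanSpace ℝ (Fin n))
    (κ ε₀ : ℝ) (hκ : 0 < κ) (hε₀ : 0 < ε₀)
    (hx : ∀ s t : ℝ, 0 ≤ s → 0 ≤ t → |s - t| ≤ ε₀ → ‖x s - x t‖ ≤ κ) :
    ∃ y : ℝ → EuclideanSpace ℝ (Fin n), ContDiff ℝ 1 y ∧
      ∀ t : ℝ, 0 ≤ t → ‖y t - x t‖ ≤ 2 * κ ∧ ‖deriv y t‖ ≤ 2 * κ / ε₀ :=
  stmt14_general n x κ ε₀ hε₀ hx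
end
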